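/- Under Assumption (A1), let x > 0 and suppose there exists an 𝓕-measurable random variable Y that is independent of σ(𝒢 ∪ ℋ) (the smallest σ-algebra making every random variable in 𝒢 ∪ ℋ measurable) and whose cumulative distribution function y ↦ ℙ{Y < y} is continuous. Then there exists a set A ∈ 𝓕 such that the pure test 1_A belongs to 𝒳ₓ and inf_{G ∈ 𝒢} 𝔼[G·1_A] = V(x); consequently V₁(x) = V(x). -/

import Mathlib

open MeasureTheory

namespace QH

variable {Ω : Type*} [MeasurableSpace Ω]

/-- The set of nonnegative measurable random variables. -/
def L0plus (Ω : Type*) [MeasurableSpace Ω] : Set (Ω → ℝ) :=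
  {f | Measurable f ∧ ∀ ω, 0 ≤ f ω}

/-- A randomized test: a measurable function with values in `[0,1]`. -/
def IsRandTest (X : Ω → ℝ) : Prop :=
  Measurable X ∧ ∀ ω, X ω ∈ Set.Icc (0 : ℝ) 1

/-- The feasible randomized tests for significance level `x` and null collection `H`. -/
def Tests (μ : Measure Ω) (H : Set (Ω → ℝ)) (x : ℝ) : Set (Ω → ℝ) :=
  {X | IsRandTest X ∧ ∀ h ∈ H, ∫ ω, h ω * X ω ∂μ ≤ x}

/-- The worst-case power of a test `X` over the alternative collection `G`. -/
noncomputable def powerInf (μ : Measure Ω) (G : Set (Ω → ℝ)) (X : Ω → ℝ) : ℝ :=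
  sInf ((fun g => ∫ ω, g ω * X ω ∂μ) '' G)

/-- The value of the randomized composite hypothesis testing problem. -/
noncomputable def V (μ : Measure Ω) (G H : Set (Ω → ℝ)) (x : ℝ) : ℝ :=
  sSup (powerInf μ G '' Tests μ H x)

/-- The value of the pure composite hypothesis testing problem. -/
noncomputable def V1 (μ : Measure Ω) (G H : Set (Ω → ℝ)) (x : ℝ) : ℝ :=
  sSup (powerInf μ G '' {X ∈ Tests μ H x | ∀ ω, X ω = 0 ∨ X ω = 1})

/-- The set `ℋₓ` of nonnegative random variables that satisfy the budget
constraint against every feasible randomized test. -/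
def HxSet (μ : Measure Ω) (H : Set (Ω → ℝ)) (x : ℝ) : Set (Ω → ℝ) :=
  {h | h ∈ L0plus Ω ∧ ∀ X ∈ Tests μ H x, ∫ ω, h ω * X ω ∂μ ≤ x}

/-- A set of (nonnegative) random variables is closed under convergence in probability,
as a subset of `L⁰⁺`. -/
def ClosedInProb (μ : Measure Ω) (S : Set (Ω → ℝ)) : Prop :=
  ∀ (f : ℕ → Ω → ℝ) (g : Ω → ℝ), (∀ n, f n ∈ S) → g ∈ L0plus Ω →
    TendstoInMeasure μ f Filter.atTop g → g ∈ S

/-- The closure of a set of random variables under convergence in probability. -/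
def clProb (μ : Measure Ω) (S : Set (Ω → ℝ)) : Set (Ω → ℝ) :=
  {g | ∃ f : ℕ → Ω → ℝ, (∀ n, f n ∈ S) ∧ TendstoInMeasure μ f Filter.atTop g}

/-- Assumption (A1): `𝒢, ℋ ⊆ L⁰⁺`, `sup_{X ∈ 𝒢∪ℋ} 𝔼[X] < ∞`, and `𝒢` is convex and
closed under convergence in probability. -/
def A1 (μ : Measure Ω) (G H : Set (Ω → ℝ)) : Prop :=
  G ⊆ L0plus Ω ∧ H ⊆ L0plus Ω ∧ (∀ f ∈ G ∪ H, Integrable f μ) ∧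
  BddAbove ((fun f => ∫ ω, f ω ∂μ) '' (G ∪ H)) ∧
  Convex ℝ G ∧ ClosedInProb μ G

/-- The smallest σ-algebra making every random variable in `G ∪ H` measurable. -/
def sigmaGen (G H : Set (Ω → ℝ)) : MeasurableSpace Ω :=
  ⨆ f ∈ G ∪ H, MeasurableSpace.comap f inferInstance

/-- The Neyman–Pearson conditions at level `x` for the tuple `(Ĝ, Ĥ, â, X̂, B)`. -/
def NPconds (μ : Measure Ω) (G H : Set (Ω → ℝ)) (x : ℝ)
    (Ghat Hhat : Ω → ℝ) (ahat : ℝ) (Xhat B : Ω → ℝ) : Prop :=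
  Ghat ∈ G ∧ Hhat ∈ clProb μ (convexHull ℝ H) ∧ 0 ≤ ahat ∧ Xhat ∈ Tests μ H x ∧
  Measurable B ∧ (∀ ω, B ω ∈ Set.Icc (0 : ℝ) 1) ∧
  (∀ ω, Xhat ω = (if ahat * Hhat ω < Ghat ω then 1 else 0)
      + B ω * (if Ghat ω = ahat * Hhat ω then 1 else 0)) ∧
  (∀ h ∈ H, ∫ ω, h ω * Xhat ω ∂μ ≤ ∫ ω, Hhat ω * Xhat ω ∂μ) ∧
  (∫ ω, Hhat ω * Xhat ω ∂μ = x) ∧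
  (∀ g ∈ G, ∫ ω, Ghat ω * Xhat ω ∂μ ≤ ∫ ω, g ω * Xhat ω ∂μ)

end QH

/-!
An optimal randomized test exists: randomized tests `X` embed into the dual of `L²` as the
functionals `v ↦ 𝔼[v X]`, a weak-* compact set (Banach–Alaoglu, and by Riesz a weak-* limit of
such functionals is again integration against a `[0, 1]`-valued function). After replacing each
`f ∈ 𝒢 ∪ ℋ` by its truncations `min f n ∈ L²`, feasibility and "power at least `c`" become
weak-* closed conditions, so Cantor's intersection theorem produces a test attaining `V(x)`.

Purification: `U = F(Y)` is uniform on `[0, 1]` and independent of `σ(𝒢 ∪ ℋ)`. With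
`Z = 𝔼[X | σ(𝒢 ∪ ℋ)]`, Fubini over the independent pair gives
`𝔼[f 1{U < Z}] = 𝔼[f Z] = 𝔼[f X]` for every `σ(𝒢 ∪ ℋ)`-measurable `f`, so the pure test
`1{U < Z}` is feasible and has the same power as `X`.
-/

namespace QH

open ProbabilityTheory Set Filter Topology
open scoped ENNReal InnerProductSpace

section RandTest

variable {Ω : Type*} [MeasurableSpace Ω] {μ : Measure Ω} {X f : Ω → ℝ}

lemma IsRandTest.norm_le_one (hX : IsRandTest X) (ω : Ω) : ‖X ω‖ ≤ 1 :=
  abs_le.2 ⟨by linarith [(hX.2 ω).1], (hX.2 ω).2⟩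

lemma IsRandTest.integrable [IsFiniteMeasure μ] (hX : IsRandTest X) : Integrable X μ :=
  (integrable_const (1 : ℝ)).mono' hX.1.aestronglyMeasurable (ae_of_all _ hX.norm_le_one)

lemma IsRandTest.memLp (hX : IsRandTest X) (p : ℝ≥0∞) (μ : Measure Ω) [IsFiniteMeasure μ] :
    MemLp X p μ :=
  .of_bound hX.1.aestronglyMeasurable 1 (ae_of_all _ hX.norm_le_one)

lemma IsRandTest.integrable_mul (hX : IsRandTest X) (hf : Integrable f μ) :
    Integrable (fun ω ↦ f ω * X ω) μ :=
  hf.mul_bdd hX.1.aestronglyMeasurable (ae_of_all _ hX.norm_le_one)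

lemma isRandTest_indicator {A : Set Ω} (hA : MeasurableSet A) :
    IsRandTest (A.indicator fun _ ↦ (1 : ℝ)) :=
  ⟨measurable_const.indicator hA, fun ω ↦ by by_cases h : ω ∈ A <;> simp [h]⟩

end RandTest

section Truncation

variable {Ω : Type*} [MeasurableSpace Ω] {μ : Measure Ω} [IsFiniteMeasure μ] {f X : Ω → ℝ}

lemma tendsto_integral_min_mul (hfi : Integrable f μ) (hX : IsRandTest X) :
    Tendsto (fun n : ℕ ↦ ∫ ω, min (f ω) n * X ω ∂μ) atTop (𝓝 (∫ ω, f ω * X ω ∂μ)) := by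
  refine integral_tendsto_of_tendsto_of_monotone
    (fun n ↦ hX.integrable_mul (hfi.inf (integrable_const (n : ℝ))))
    (hX.integrable_mul hfi) (ae_of_all _ fun ω a b hab ↦ ?_) (ae_of_all _ fun ω ↦ ?_)
  · exact mul_le_mul_of_nonneg_right (min_le_min_left _ (Nat.cast_le.2 hab)) (hX.2 ω).1
  · refine tendsto_atTop_of_eventually_const (i₀ := ⌈f ω⌉₊) fun n hn ↦ ?_
    rw [min_eq_left ((Nat.le_ceil (f ω)).trans (Nat.cast_le.2 hn))]

lemma integral_min_mul_le (hfi : Integrable f μ) (hX : IsRandTest X) (n : ℕ) :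
    ∫ ω, min (f ω) n * X ω ∂μ ≤ ∫ ω, f ω * X ω ∂μ :=
  integral_mono (hX.integrable_mul (hfi.inf (integrable_const (n : ℝ)))) (hX.integrable_mul hfi)
    fun ω ↦ mul_le_mul_of_nonneg_right (min_le_left _ _) (hX.2 ω).1

lemma integral_mul_sub_integral_min_mul_le (hfi : Integrable f μ) (hX : IsRandTest X) (n : ℕ) :
    ∫ ω, f ω * X ω ∂μ - ∫ ω, min (f ω) n * X ω ∂μ ≤ ∫ ω, f ω ∂μ - ∫ ω, min (f ω) n ∂μ := by
  have hmin : Integrable (fun ω ↦ min (f ω) n) μ := hfi.inf (integrable_const (n : ℝ))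
  rw [← integral_sub (hX.integrable_mul hfi) (hX.integrable_mul hmin), ← integral_sub hfi hmin]
  refine integral_mono ((hX.integrable_mul hfi).sub (hX.integrable_mul hmin)) (hfi.sub hmin)
    fun ω ↦ ?_
  have hgap : 0 ≤ f ω - min (f ω) n := sub_nonneg.2 (min_le_left _ _)
  calc f ω * X ω - min (f ω) n * X ω = (f ω - min (f ω) n) * X ω := by ring
    _ ≤ f ω - min (f ω) n := mul_le_of_le_one_right hgap (hX.2 ω).2

lemma integral_mul_le_iff_forall_min (hfi : Integrable f μ)
    (hX : IsRandTest X) {c : ℝ} :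
    ∫ ω, f ω * X ω ∂μ ≤ c ↔ ∀ n : ℕ, ∫ ω, min (f ω) n * X ω ∂μ ≤ c :=
  ⟨fun h n ↦ (integral_min_mul_le hfi hX n).trans h,
    fun h ↦ le_of_tendsto' (tendsto_integral_min_mul hfi hX) h⟩

lemma le_integral_mul_iff_forall_min (hfi : Integrable f μ)
    (hX : IsRandTest X) {c : ℝ} :
    c ≤ ∫ ω, f ω * X ω ∂μ ↔
      ∀ n : ℕ, c - (∫ ω, f ω ∂μ - ∫ ω, min (f ω) n ∂μ) ≤ ∫ ω, min (f ω) n * X ω ∂μ := by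
  refine ⟨fun h n ↦ by linarith [integral_mul_sub_integral_min_mul_le hfi hX n], fun h ↦ ?_⟩
  have hone : IsRandTest fun _ : Ω ↦ (1 : ℝ) := ⟨measurable_const, fun _ ↦ ⟨zero_le_one, le_rfl⟩⟩
  have hgap : Tendsto (fun n : ℕ ↦ ∫ ω, f ω ∂μ - ∫ ω, min (f ω) n ∂μ) atTop (𝓝 0) := by
    simpa using (tendsto_integral_min_mul hfi hone).const_sub (∫ ω, f ω ∂μ)
  simpa using le_of_tendsto_of_tendsto' (hgap.const_sub c) (tendsto_integral_min_mul hfi hX) h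

end Truncation

section Clamp

variable {Ω : Type*} {m mΩ : MeasurableSpace Ω} {μ : Measure Ω}

lemma measurable_projIcc_comp {g : Ω → ℝ} (hg : Measurable[m] g) :
    Measurable[m] fun ω ↦ (projIcc (0 : ℝ) 1 zero_le_one (g ω) : ℝ) :=
  (continuous_subtype_val.comp continuous_projIcc).measurable.comp hg

lemma projIcc_comp_ae_eq {g : Ω → ℝ} (hg : ∀ᵐ ω ∂μ, g ω ∈ Icc (0 : ℝ) 1) :
    (fun ω ↦ (projIcc (0 : ℝ) 1 zero_le_one (g ω) : ℝ)) =ᵐ[μ] g :=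
  hg.mono fun _ hω ↦ congrArg Subtype.val (projIcc_of_mem _ hω)

end Clamp

section TestFunctionals

variable {Ω : Type*} [MeasurableSpace Ω] {μ : Measure Ω} [IsFiniteMeasure μ] {X : Ω → ℝ}

def testFunctionals (μ : Measure Ω) : Set (WeakDual ℝ (Lp ℝ 2 μ)) :=
  {φ | ∃ X, IsRandTest X ∧ ∀ v : Lp ℝ 2 μ, φ v = ∫ ω, v ω * X ω ∂μ}

lemma IsRandTest.inner_toLp (hX : IsRandTest X) (v : Lp ℝ 2 μ) :
    ⟪(hX.memLp 2 μ).toLp X, v⟫_ℝ = ∫ ω, v ω * X ω ∂μ := by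
  rw [L2.inner_def]
  refine integral_congr_ae ?_
  filter_upwards [(hX.memLp 2 μ).coeFn_toLp] with ω hω
  rw [hω, real_inner_eq_re_inner, RCLike.inner_apply]
  simp [mul_comm]

lemma IsRandTest.exists_weakDual_apply_eq (hX : IsRandTest X) :
    ∃ φ : WeakDual ℝ (Lp ℝ 2 μ), ∀ v : Lp ℝ 2 μ, φ v = ∫ ω, v ω * X ω ∂μ :=
  ⟨StrongDual.toWeakDual (InnerProductSpace.toDual ℝ _ ((hX.memLp 2 μ).toLp X)), hX.inner_toLp⟩

lemma testFunctionals_subset_closedBall :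
    testFunctionals μ ⊆
      WeakDual.toStrongDual ⁻¹' Metric.closedBall 0 (measureUnivNNReal μ ^ (2 : ℝ)⁻¹) := by
  rintro φ ⟨X, hX, hφ⟩
  rw [mem_preimage, mem_closedBall_zero_iff]
  refine ContinuousLinearMap.opNorm_le_bound _ (by positivity) fun v ↦ ?_
  have hXnorm : ‖(hX.memLp 2 μ).toLp X‖ ≤ measureUnivNNReal μ ^ (2 : ℝ)⁻¹ := by
    have := Lp.norm_le_of_ae_bound (f := (hX.memLp 2 μ).toLp X) zero_le_one
      (((hX.memLp 2 μ).coeFn_toLp).mono fun ω hω ↦ hω ▸ hX.norm_le_one ω)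
    simpa using this
  calc ‖WeakDual.toStrongDual φ v‖ = ‖⟪(hX.memLp 2 μ).toLp X, v⟫_ℝ‖ := by
        rw [hX.inner_toLp, ← hφ]; rfl
    _ ≤ ‖(hX.memLp 2 μ).toLp X‖ * ‖v‖ := norm_inner_le_norm _ _
    _ ≤ _ := by gcongr

lemma integral_indicatorConstLp_one_mul {s : Set Ω} (hs : MeasurableSet s) (g : Ω → ℝ) :
    ∫ ω, indicatorConstLp 2 hs (measure_ne_top μ s) (1 : ℝ) ω * g ω ∂μ = ∫ ω in s, g ω ∂μ := by
  rw [← integral_indicator hs]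
  refine integral_congr_ae ?_
  filter_upwards [indicatorConstLp_coeFn (p := 2) (hs := hs) (hμs := measure_ne_top μ s)
    (c := (1 : ℝ))] with ω hω
  by_cases hω' : ω ∈ s <;> simp [hω, hω']

lemma apply_indicatorConstLp_mem_Icc_of_mem_closure {φ : WeakDual ℝ (Lp ℝ 2 μ)}
    (hφ : φ ∈ closure (testFunctionals μ)) {s : Set Ω} (hs : MeasurableSet s) :
    φ (indicatorConstLp 2 hs (measure_ne_top μ s) 1) ∈ Icc 0 (μ.real s) := by
  refine closure_minimal ?_ (isClosed_Icc.preimage (WeakDual.eval_continuous _)) hφ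
  rintro ψ ⟨X, hX, hψ⟩
  rw [mem_preimage, hψ, integral_indicatorConstLp_one_mul]
  refine ⟨setIntegral_nonneg hs fun ω _ ↦ (hX.2 ω).1, ?_⟩
  calc ∫ ω in s, X ω ∂μ ≤ ∫ ω in s, 1 ∂μ :=
        setIntegral_mono hX.integrable.integrableOn (integrable_const 1).integrableOn
          fun ω ↦ (hX.2 ω).2
    _ = μ.real s := by simp

lemma isClosed_testFunctionals : IsClosed (testFunctionals μ) := by
  refine closure_subset_iff_isClosed.1 fun φ hφ ↦ ?_
  set u := (InnerProductSpace.toDual ℝ (Lp ℝ 2 μ)).symm (WeakDual.toStrongDual φ)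
  have hφu : ∀ v : Lp ℝ 2 μ, φ v = ∫ ω, v ω * u ω ∂μ := fun v ↦ by
    have h := InnerProductSpace.toDual_symm_apply (𝕜 := ℝ) (x := v) (y := WeakDual.toStrongDual φ)
    rw [L2.inner_def] at h
    simpa [real_inner_eq_re_inner, mul_comm] using h.symm
  have hui : Integrable u μ := (Lp.memLp u).integrable one_le_two
  have hset (s : Set Ω) (hs : MeasurableSet s) : ∫ ω in s, u ω ∂μ ∈ Icc 0 (μ.real s) := by
    rw [← integral_indicatorConstLp_one_mul hs, ← hφu]
    exact apply_indicatorConstLp_mem_Icc_of_mem_closure hφ hs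
  have hu01 : ∀ᵐ ω ∂μ, u ω ∈ Icc (0 : ℝ) 1 := by
    have h0 := ae_nonneg_of_forall_setIntegral_nonneg hui fun s hs _ ↦ (hset s hs).1
    have h1 := ae_le_of_forall_setIntegral_le hui (integrable_const (1 : ℝ)) fun s hs _ ↦ by
      simpa using (hset s hs).2
    filter_upwards [h0, h1] with ω using And.intro
  refine ⟨fun ω ↦ projIcc (0 : ℝ) 1 zero_le_one (u ω),
    ⟨measurable_projIcc_comp (Lp.stronglyMeasurable u).measurable, fun ω ↦ (projIcc _ _ _ _).2⟩,
    fun v ↦ ?_⟩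
  rw [hφu]
  refine integral_congr_ae ?_
  filter_upwards [projIcc_comp_ae_eq hu01] with ω hω
  rw [hω]

lemma isCompact_testFunctionals : IsCompact (testFunctionals μ) :=
  (WeakDual.isCompact_closedBall _ _).of_isClosed_subset isClosed_testFunctionals
    testFunctionals_subset_closedBall

end TestFunctionals

section Optimal

variable {Ω : Type*} [MeasurableSpace Ω] {μ : Measure Ω} {G H : Set (Ω → ℝ)} {f X : Ω → ℝ}
  {x c : ℝ}

lemma memLp_min_natCast [IsFiniteMeasure μ] (hf : f ∈ L0plus Ω) (n : ℕ) (p : ℝ≥0∞) :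
    MemLp (fun ω ↦ min (f ω) n) p μ :=
  .of_bound (hf.1.min measurable_const).aestronglyMeasurable n <| ae_of_all _ fun ω ↦ by
    rw [Real.norm_of_nonneg (le_min (hf.2 ω) n.cast_nonneg)]
    exact min_le_right _ _

noncomputable def truncLp (μ : Measure Ω) [IsFiniteMeasure μ] (hf : f ∈ L0plus Ω) (n : ℕ) :
    Lp ℝ 2 μ :=
  (memLp_min_natCast hf n 2).toLp _

lemma apply_truncLp [IsFiniteMeasure μ] {φ : WeakDual ℝ (Lp ℝ 2 μ)}
    (hφ : ∀ v : Lp ℝ 2 μ, φ v = ∫ ω, v ω * X ω ∂μ) (hf : f ∈ L0plus Ω) (n : ℕ) :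
    φ (truncLp μ hf n) = ∫ ω, min (f ω) n * X ω ∂μ := by
  rw [hφ]
  refine integral_congr_ae ?_
  filter_upwards [(memLp_min_natCast hf n 2).coeFn_toLp] with ω hω
  rw [truncLp, hω]

lemma zero_mem_tests (hx : 0 ≤ x) : (fun _ ↦ 0) ∈ Tests μ H x :=
  ⟨⟨measurable_const, fun _ ↦ ⟨le_rfl, zero_le_one⟩⟩, fun _ _ ↦ by simpa using hx⟩

lemma powerInf_le_integral_mul (hG : G ⊆ L0plus Ω) (hX : IsRandTest X) {g : Ω → ℝ}
    (hg : g ∈ G) : powerInf μ G X ≤ ∫ ω, g ω * X ω ∂μ := by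
  refine csInf_le ⟨0, ?_⟩ ⟨g, hg, rfl⟩
  rintro _ ⟨g, hg, rfl⟩
  exact integral_nonneg fun ω ↦ mul_nonneg ((hG hg).2 ω) (hX.2 ω).1

/-- Tests feasible at level `x` with power at least `c` against every alternative, written
through truncations as weak-* closed conditions (see `mem_powerfulFunctionals_iff`). -/
def powerfulFunctionals (μ : Measure Ω) [IsFiniteMeasure μ] (hG : G ⊆ L0plus Ω)
    (hH : H ⊆ L0plus Ω) (x c : ℝ) : Set (WeakDual ℝ (Lp ℝ 2 μ)) :=
  testFunctionals μ ∩ {φ | ∀ h (hh : h ∈ H) (n : ℕ), φ (truncLp μ (hH hh) n) ≤ x} ∩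
    {φ | ∀ g (hg : g ∈ G) (n : ℕ),
      c - (∫ ω, g ω ∂μ - ∫ ω, min (g ω) n ∂μ) ≤ φ (truncLp μ (hG hg) n)}

variable [IsFiniteMeasure μ] {hG : G ⊆ L0plus Ω} {hH : H ⊆ L0plus Ω}

lemma isClosed_powerfulFunctionals : IsClosed (powerfulFunctionals μ hG hH x c) := by
  simp only [powerfulFunctionals, ofPred_forall]
  exact (isClosed_testFunctionals.inter
    (isClosed_iInter fun _ ↦ isClosed_iInter fun _ ↦ isClosed_iInter fun _ ↦
      isClosed_le (WeakDual.eval_continuous _) continuous_const)).inter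
    (isClosed_iInter fun _ ↦ isClosed_iInter fun _ ↦ isClosed_iInter fun _ ↦
      isClosed_le continuous_const (WeakDual.eval_continuous _))

lemma mem_powerfulFunctionals_iff (hint : ∀ f ∈ G ∪ H, Integrable f μ) (hX : IsRandTest X)
    {φ : WeakDual ℝ (Lp ℝ 2 μ)} (hφ : ∀ v : Lp ℝ 2 μ, φ v = ∫ ω, v ω * X ω ∂μ) :
    φ ∈ powerfulFunctionals μ hG hH x c ↔ X ∈ Tests μ H x ∧ ∀ g ∈ G, c ≤ ∫ ω, g ω * X ω ∂μ := by
  have hφX : φ ∈ testFunctionals μ := ⟨X, hX, hφ⟩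
  simp only [powerfulFunctionals, mem_inter_iff, mem_ofPred_eq, apply_truncLp hφ, hφX, true_and,
    Tests, hX]
  exact and_congr
    (forall₂_congr fun h hh ↦ (integral_mul_le_iff_forall_min (hint h (.inr hh)) hX).symm)
    (forall₂_congr fun g hg ↦ (le_integral_mul_iff_forall_min (hint g (.inl hg)) hX).symm)

lemma antitone_powerfulFunctionals : Antitone (powerfulFunctionals μ hG hH x) :=
  fun _ _ hcd _ ⟨hφ, hφG⟩ ↦ ⟨hφ, fun g hg n ↦ (sub_le_sub_right hcd _).trans (hφG g hg n)⟩

theorem exists_isGreatest_powerInf (hG : G ⊆ L0plus Ω) (hH : H ⊆ L0plus Ω)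
    (hint : ∀ f ∈ G ∪ H, Integrable f μ) (hx : 0 ≤ x) :
    ∃ X ∈ Tests μ H x, IsGreatest (powerInf μ G '' Tests μ H x) (powerInf μ G X) := by
  rcases G.eq_empty_or_nonempty with rfl | hGne
  · refine ⟨_, zero_mem_tests hx, mem_image_of_mem _ (zero_mem_tests hx), ?_⟩
    rintro _ ⟨X, -, rfl⟩
    simp [powerInf]
  set Q := powerfulFunctionals μ hG hH x
  let i₀ : powerInf μ G '' Tests μ H x := ⟨_, mem_image_of_mem _ (zero_mem_tests hx)⟩
  have : Nonempty (powerInf μ G '' Tests μ H x) := ⟨i₀⟩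
  have hQne (i : powerInf μ G '' Tests μ H x) : (Q i).Nonempty := by
    obtain ⟨_, Y, hY, rfl⟩ := i
    obtain ⟨ψ, hψ⟩ := hY.1.exists_weakDual_apply_eq (μ := μ)
    exact ⟨ψ, (mem_powerfulFunctionals_iff hint hY.1 hψ).2
      ⟨hY, fun g hg ↦ powerInf_le_integral_mul hG hY.1 hg⟩⟩
  obtain ⟨φ, hφ⟩ := IsCompact.nonempty_iInter_of_directed_nonempty_isCompact_isClosed
    (fun c : powerInf μ G '' Tests μ H x ↦ Q c)
    (antitone_powerfulFunctionals.comp_monotone (Subtype.mono_coe _)).directed_ge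
    hQne (fun _ ↦ isCompact_testFunctionals.of_isClosed_subset isClosed_powerfulFunctionals
      fun _ hφ ↦ hφ.1.1)
    fun _ ↦ isClosed_powerfulFunctionals
  obtain ⟨X, hX, hφX⟩ := (mem_iInter.1 hφ i₀).1.1
  have hpow (i : powerInf μ G '' Tests μ H x) :
      X ∈ Tests μ H x ∧ ∀ g ∈ G, i.1 ≤ ∫ ω, g ω * X ω ∂μ :=
    (mem_powerfulFunctionals_iff hint hX hφX).1 (mem_iInter.1 hφ i)
  refine ⟨X, (hpow i₀).1, mem_image_of_mem _ (hpow i₀).1, fun c hc ↦ ?_⟩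
  exact le_csInf (hGne.image _) (by rintro _ ⟨g, hg, rfl⟩; exact (hpow ⟨c, hc⟩).2 g hg)

end Optimal

section Uniform

variable {ν : Measure ℝ} [IsProbabilityMeasure ν]

lemma Ioo_subset_range_measureReal_Iio (hF : Continuous fun y ↦ ν.real (Iio y)) :
    Ioo 0 1 ⊆ range fun y ↦ ν.real (Iio y) := by
  intro r hr
  refine mem_range_of_exists_le_of_exists_ge hF ?_ ?_
  · obtain ⟨a, ha⟩ := ((tendsto_cdf_atBot (μ := ν)).eventually (gt_mem_nhds hr.1)).exists
    rw [cdf_eq_real] at ha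
    exact ⟨a, (measureReal_mono Iio_subset_Iic_self).trans ha.le⟩
  · obtain ⟨b, hb⟩ := ((tendsto_cdf_atTop (μ := ν)).eventually (lt_mem_nhds hr.2)).exists
    rw [cdf_eq_real] at hb
    exact ⟨b + 1, hb.le.trans (measureReal_mono (Iic_subset_Iio.2 (lt_add_one b)))⟩

/-- Probability integral transform. -/
lemma measureReal_setOf_measureReal_Iio_lt (hF : Continuous fun y ↦ ν.real (Iio y)) {t : ℝ}
    (ht : t ∈ Icc 0 1) : ν.real {y | ν.real (Iio y) < t} = t := by
  have hmono : Monotone fun y ↦ ν.real (Iio y) := fun _ _ hab ↦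
    measureReal_mono (Iio_subset_Iio hab)
  apply le_antisymm
  · refine le_of_forall_gt_imp_ge_of_dense fun r htr ↦ ?_
    rcases lt_or_ge r 1 with hr1 | hr1
    · obtain ⟨b, rfl⟩ := Ioo_subset_range_measureReal_Iio hF ⟨ht.1.trans_lt htr, hr1⟩
      refine measureReal_mono fun y hy ↦ ?_
      by_contra hby
      exact (hy.trans htr).not_ge (hmono (not_lt.1 hby))
    · exact measureReal_le_one.trans hr1
  · refine le_of_forall_lt_imp_le_of_dense fun r hrt ↦ ?_
    rcases le_or_gt r 0 with hr0 | hr0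
    · exact hr0.trans measureReal_nonneg
    · obtain ⟨a, rfl⟩ := Ioo_subset_range_measureReal_Iio hF ⟨hr0, hrt.trans_le ht.2⟩
      exact measureReal_mono fun y hy ↦ (hmono (le_of_lt hy)).trans_lt hrt

lemma measureReal_probIntegralTransform_lt {Ω : Type*} [MeasurableSpace Ω] {μ : Measure Ω}
    [IsProbabilityMeasure μ] {Y : Ω → ℝ} (hY : Measurable Y)
    (hF : Continuous fun y ↦ (μ {ω | Y ω < y}).toReal) {t : ℝ} (ht : t ∈ Icc 0 1) :
    μ.real {ω | (μ {ω' | Y ω' < Y ω}).toReal < t} = t := by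
  have : IsProbabilityMeasure (μ.map Y) := Measure.isProbabilityMeasure_map hY.aemeasurable
  have hlaw : (fun y ↦ (μ.map Y).real (Iio y)) = fun y ↦ (μ {ω | Y ω < y}).toReal :=
    funext fun y ↦ map_measureReal_apply hY measurableSet_Iio
  rw [← hlaw] at hF
  have key := measureReal_setOf_measureReal_Iio_lt hF ht
  rw [map_measureReal_apply hY (measurableSet_lt hF.measurable measurable_const)] at key
  simp only [map_measureReal_apply hY measurableSet_Iio] at key
  exact key

end Uniform

section Purification

variable {Ω : Type*} {m mΩ : MeasurableSpace Ω} {μ : Measure Ω}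

lemma integral_mul_condExp (hm : m ≤ mΩ) [SigmaFinite (μ.trim hm)] {f X : Ω → ℝ}
    (hf : StronglyMeasurable[m] f) (hfX : Integrable (f * X) μ) (hX : Integrable X μ) :
    ∫ ω, f ω * μ[X | m] ω ∂μ = ∫ ω, f ω * X ω ∂μ :=
  calc ∫ ω, f ω * μ[X | m] ω ∂μ = ∫ ω, μ[f * X | m] ω ∂μ :=
        integral_congr_ae (condExp_mul_of_stronglyMeasurable_left hf hfX hX).symm
    _ = ∫ ω, f ω * X ω ∂μ := integral_condExp hm

lemma integral_comp_prodMk_of_indepFun [IsProbabilityMeasure μ] {W : Ω → ℝ × ℝ} {U : Ω → ℝ}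
    (hW : Measurable W) (hU : Measurable U) (hWU : IndepFun W U μ) {ψ : (ℝ × ℝ) × ℝ → ℝ}
    (hψ : Measurable ψ) (hψi : Integrable (fun ω ↦ ψ (W ω, U ω)) μ) :
    ∫ ω, ψ (W ω, U ω) ∂μ = ∫ w, ∫ u, ψ (w, u) ∂(μ.map U) ∂(μ.map W) := by
  have hprod := (indepFun_iff_map_prod_eq_prod_map_map hW.aemeasurable hU.aemeasurable).1 hWU
  have hψi' : Integrable ψ ((μ.map W).prod (μ.map U)) := by
    rwa [← hprod, integrable_map_measure hψ.aestronglyMeasurable (hW.prodMk hU).aemeasurable]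
  rw [← integral_prod _ hψi', ← hprod,
    integral_map (hW.prodMk hU).aemeasurable hψ.aestronglyMeasurable]

lemma integral_mul_indicator_lt_of_indep [IsProbabilityMeasure μ] (hm : m ≤ mΩ)
    {U Z f : Ω → ℝ} (hU : Measurable U)
    (hUind : Indep (MeasurableSpace.comap U inferInstance) m μ)
    (hUunif : ∀ t ∈ Icc (0 : ℝ) 1, μ.real {ω | U ω < t} = t)
    (hZ : Measurable[m] Z) (hZ01 : ∀ ω, Z ω ∈ Icc (0 : ℝ) 1)
    (hf : Measurable[m] f) (hfi : Integrable f μ) :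
    ∫ ω, f ω * {ω | U ω < Z ω}.indicator (fun _ ↦ (1 : ℝ)) ω ∂μ = ∫ ω, f ω * Z ω ∂μ := by
  set W : Ω → ℝ × ℝ := fun ω ↦ (f ω, Z ω)
  have hWm : Measurable[m] W := hf.prodMk hZ
  have hW : Measurable W := hWm.mono hm le_rfl
  have hWU : IndepFun W U μ := by
    rw [IndepFun_iff_Indep]
    exact indep_of_indep_of_le_left hUind.symm hWm.comap_le
  set ψ : (ℝ × ℝ) × ℝ → ℝ := {p | p.2 < p.1.2}.indicator fun p ↦ p.1.1
  have hψ : Measurable ψ :=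
    measurable_fst.fst.indicator (measurableSet_lt measurable_snd measurable_fst.snd)
  have hψWU : (fun ω ↦ ψ (W ω, U ω)) = fun ω ↦ f ω * {ω | U ω < Z ω}.indicator (fun _ ↦ 1) ω := by
    ext ω
    simp only [ψ, W, indicator_apply, mem_ofPred_eq, mul_ite, mul_one, mul_zero]
  have hψi : Integrable (fun ω ↦ ψ (W ω, U ω)) μ := by
    rw [hψWU]
    exact (isRandTest_indicator (measurableSet_lt hU (hZ.mono hm le_rfl))).integrable_mul hfi
  have hinner (w : ℝ × ℝ) (hw : w.2 ∈ Icc (0 : ℝ) 1) : ∫ u, ψ (w, u) ∂(μ.map U) = w.1 * w.2 := by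
    change ∫ u, (Iio w.2).indicator (fun _ ↦ w.1) u ∂(μ.map U) = _
    rw [integral_indicator_const _ measurableSet_Iio, map_measureReal_apply hU measurableSet_Iio,
      smul_eq_mul, mul_comm]
    exact congrArg (w.1 * ·) (hUunif _ hw)
  have hW01 : ∀ᵐ w ∂(μ.map W), w.2 ∈ Icc (0 : ℝ) 1 :=
    (ae_map_iff hW.aemeasurable (measurable_snd measurableSet_Icc)).2 (ae_of_all _ hZ01)
  calc ∫ ω, f ω * {ω | U ω < Z ω}.indicator (fun _ ↦ 1) ω ∂μ
      = ∫ w, ∫ u, ψ (w, u) ∂(μ.map U) ∂(μ.map W) := by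
        rw [← hψWU, integral_comp_prodMk_of_indepFun hW hU hWU hψ hψi]
    _ = ∫ w, w.1 * w.2 ∂(μ.map W) := integral_congr_ae (hW01.mono hinner)
    _ = ∫ ω, f ω * Z ω ∂μ := integral_map hW.aemeasurable (by fun_prop)

lemma ae_condExp_mem_Icc [IsFiniteMeasure μ] (hm : m ≤ mΩ) {X : Ω → ℝ}
    (hX : IsRandTest X) : ∀ᵐ ω ∂μ, μ[X | m] ω ∈ Icc (0 : ℝ) 1 := by
  have h0 : 0 ≤ᵐ[μ] μ[X | m] := condExp_nonneg (ae_of_all _ fun ω ↦ (hX.2 ω).1)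
  have h1 : μ[X | m] ≤ᵐ[μ] μ[fun _ ↦ (1 : ℝ) | m] :=
    condExp_mono hX.integrable (integrable_const 1) (ae_of_all _ fun ω ↦ (hX.2 ω).2)
  rw [condExp_const hm] at h1
  filter_upwards [h0, h1] with ω using And.intro

theorem exists_measurableSet_integral_mul_indicator_eq [IsProbabilityMeasure μ] (hm : m ≤ mΩ)
    {U : Ω → ℝ} (hU : Measurable U) (hUind : Indep (MeasurableSpace.comap U inferInstance) m μ)
    (hUunif : ∀ t ∈ Icc (0 : ℝ) 1, μ.real {ω | U ω < t} = t) {X : Ω → ℝ} (hX : IsRandTest X) :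
    ∃ A, MeasurableSet A ∧ ∀ f : Ω → ℝ, Measurable[m] f → Integrable f μ →
      ∫ ω, f ω * A.indicator (fun _ ↦ (1 : ℝ)) ω ∂μ = ∫ ω, f ω * X ω ∂μ := by
  set Z : Ω → ℝ := fun ω ↦ projIcc (0 : ℝ) 1 zero_le_one (μ[X | m] ω)
  have hZ : Measurable[m] Z := measurable_projIcc_comp stronglyMeasurable_condExp.measurable
  refine ⟨{ω | U ω < Z ω}, measurableSet_lt hU (hZ.mono hm le_rfl), fun f hf hfi ↦ ?_⟩
  calc ∫ ω, f ω * {ω | U ω < Z ω}.indicator (fun _ ↦ 1) ω ∂μ = ∫ ω, f ω * Z ω ∂μ :=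
        integral_mul_indicator_lt_of_indep hm hU hUind hUunif hZ (fun ω ↦ (projIcc _ _ _ _).2)
          hf hfi
    _ = ∫ ω, f ω * μ[X | m] ω ∂μ := by
        refine integral_congr_ae ?_
        filter_upwards [projIcc_comp_ae_eq (ae_condExp_mem_Icc hm hX)] with ω hω
        exact congrArg (f ω * ·) hω
    _ = ∫ ω, f ω * X ω ∂μ := integral_mul_condExp hm hf.stronglyMeasurable (hX.integrable_mul hfi)
          hX.integrable

end Purification

section SigmaGen

variable {Ω : Type*} {G H : Set (Ω → ℝ)} {f : Ω → ℝ}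

lemma sigmaGen_le [mΩ : MeasurableSpace Ω] (hGH : G ∪ H ⊆ L0plus Ω) : sigmaGen G H ≤ mΩ :=
  iSup₂_le fun _ hf ↦ (hGH hf).1.comap_le

lemma measurable_sigmaGen (hf : f ∈ G ∪ H) : Measurable[sigmaGen G H] f :=
  measurable_iff_comap_le.2 <|
    le_iSup₂ (f := fun g (_ : g ∈ G ∪ H) ↦ MeasurableSpace.comap g inferInstance) f hf

end SigmaGen

end QH

/-- Under Assumption (A1), for `x > 0`, if there is an `𝓕`-measurable `Y`,
independent of `σ(𝒢 ∪ ℋ)`, with continuous c.d.f., then some pure test `1_A` belongs to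
`𝒳ₓ` and attains `V(x)`; consequently `V₁(x) = V(x)`. -/
theorem stmt_11 {Ω : Type*} [MeasurableSpace Ω] (μ : MeasureTheory.Measure Ω)
    [MeasureTheory.IsProbabilityMeasure μ]
    (G H : Set (Ω → ℝ)) (hA1 : QH.A1 μ G H) (x : ℝ) (hx : 0 < x)
    (Y : Ω → ℝ) (hYm : Measurable Y)
    (hInd : ProbabilityTheory.Indep
      (MeasurableSpace.comap Y inferInstance) (QH.sigmaGen G H) μ)
    (hCdf : Continuous fun y : ℝ => (μ {ω | Y ω < y}).toReal) :
    ∃ A : Set Ω, MeasurableSet A ∧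
      Set.indicator A (fun _ => (1 : ℝ)) ∈ QH.Tests μ H x ∧
      QH.powerInf μ G (Set.indicator A (fun _ => (1 : ℝ))) = QH.V μ G H x ∧
      QH.V1 μ G H x = QH.V μ G H x := by
  obtain ⟨hG, hH, hint, -, -, -⟩ := hA1
  obtain ⟨X, hXT, hXmax⟩ := QH.exists_isGreatest_powerInf hG hH hint hx.le
  set U : Ω → ℝ := fun ω ↦ (μ {ω' | Y ω' < Y ω}).toReal
  have hUind : ProbabilityTheory.Indep (MeasurableSpace.comap U inferInstance)
      (QH.sigmaGen G H) μ :=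
    ProbabilityTheory.indep_of_indep_of_le_left hInd
      (hCdf.measurable.comp (comap_measurable Y)).comap_le
  obtain ⟨A, hA, hAX⟩ := QH.exists_measurableSet_integral_mul_indicator_eq
    (QH.sigmaGen_le (Set.union_subset hG hH)) (hCdf.measurable.comp hYm) hUind
    (fun _ ht ↦ QH.measureReal_probIntegralTransform_lt hYm hCdf ht) hXT.1
  have hGH (f) (hf : f ∈ G ∪ H) := hAX f (QH.measurable_sigmaGen hf) (hint f hf)
  have hAT : A.indicator (fun _ ↦ (1 : ℝ)) ∈ QH.Tests μ H x :=
    ⟨QH.isRandTest_indicator hA, fun h hh ↦ (hGH h (.inr hh)).trans_le (hXT.2 h hh)⟩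
  have hpow : QH.powerInf μ G (A.indicator fun _ ↦ 1) = QH.powerInf μ G X :=
    congrArg sInf (Set.image_congr fun g hg ↦ hGH g (.inl hg))
  have hpure : IsGreatest (QH.powerInf μ G '' {X ∈ QH.Tests μ H x | ∀ ω, X ω = 0 ∨ X ω = 1})
      (QH.powerInf μ G (A.indicator fun _ ↦ 1)) :=
    ⟨⟨_, ⟨hAT, fun ω ↦ Set.indicator_eq_zero_or_self _ _ ω⟩, rfl⟩,
      upperBounds_mono_set (Set.image_mono (Set.sep_subset _ _)) (hpow ▸ hXmax.2)⟩
  refine ⟨A, hA, hAT, ?_, ?_⟩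
  · rw [QH.V, hXmax.csSup_eq, hpow]
  · rw [QH.V1, QH.V, hpure.csSup_eq, hXmax.csSup_eq, hpow]
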